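/- For every nonnegative integer n: Σ_{k=0}^n q^{k²} / ((q²;q²)_k (q;q)_{n−k}) = Σ_{k=−n}^n (−1)^k q^{2k²} / ((q;q)_{n−k} (q;q)_{n+k}). -/

import Mathlib

open Finset

noncomputable def qp (x q : ℂ) (n : ℕ) : ℂ := ∏ j ∈ Finset.range n, (1 - x * q ^ j)

noncomputable def qpinf (x q : ℂ) : ℂ := ∏' j : ℕ, (1 - x * q ^ j)

noncomputable def qbinom (q : ℂ) (n k : ℕ) : ℂ := qp q q n / (qp q q k * qp q q (n - k))

noncomputable def RS (a b q : ℂ) (n : ℕ) : ℂ :=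
  ∑ k ∈ Finset.range (n + 1), qbinom q n k * a ^ k * b ^ (n - k)

noncomputable def Tsum (q : ℂ) (r n s : ℕ) : ℂ :=
  ∑ k ∈ Finset.range (n + 1),
    qp (q ^ (-(2 * (n : ℤ)))) (q ^ 2) k / (qp q q k * qp (q ^ ((1 : ℤ) + r - n)) q k)
      * q ^ ((2 - (s : ℤ)) * k)

noncomputable def gam (q : ℂ) (n : ℕ) : ℂ :=
  ∑ k ∈ Finset.range (n + 1), qbinom q n k * q ^ (k ^ 2) / qp (-q) q k

/-!
Both sides, as functions of `n`, satisfy the second-order recurrence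
`(1 - q ^ (2n+4)) X (n+2) = (1 + q + q ^ (2n+3)) X (n+1) - q X n` and agree for `n = 0, 1`;
as `q` is not a root of unity the leading coefficient never vanishes. Each recurrence comes from
creative telescoping: the `n`- and `(n+1)`-summands are the `(n+2)`-summand times explicit
factors, and the resulting combination of summands is `G (k + 1) - G k` for the Zeilberger
certificates `G k = (q ^ (2n+4) - q ^ (2(n+2-k))) L k` on the left and
`G k = -q ^ (2(n+2-k)) (1 - q ^ (n+2+k)) R k` on the right.
-/

theorem Int.sum_Ico_sub {M : Type*} [AddCommGroup M] (f : ℤ → M) {a b : ℤ} (h : a ≤ b) :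
    ∑ k ∈ Ico a b, (f (k + 1) - f k) = f b - f a := by
  rw [Int.Ico_eq_finset_map, sum_map]
  simpa [add_assoc, h] using sum_range_sub (fun i : ℕ => f (a + i)) (b - a).toNat

section Recurrence

variable {R ι : Type*} [CommRing R]

theorem sum_eq_sum_mul_of_subset {s t : Finset ι} {f g w : ι → R} (hst : s ⊆ t)
    (hf : ∀ k ∈ s, f k = w k * g k) (hw : ∀ k, k ∉ s → w k = 0) :
    ∑ k ∈ s, f k = ∑ k ∈ t, w k * g k := by
  rw [sum_congr rfl hf]
  exact sum_subset hst fun k _ hk => by rw [hw k hk, zero_mul]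

theorem recurrence_of_sum_telescoping (s : ℕ → Finset ι) (F w : ℕ → ι → R)
    (hs : ∀ n, s n ⊆ s (n + 1)) (hF : ∀ n, ∀ k ∈ s n, F n k = w n k * F (n + 1) k)
    (hw : ∀ n k, k ∉ s n → w n k = 0) (n : ℕ) (a b c : R)
    (hcert : ∑ k ∈ s (n + 2),
      (a - b * w (n + 1) k + c * (w n k * w (n + 1) k)) * F (n + 2) k = 0) :
    a * ∑ k ∈ s (n + 2), F (n + 2) k
      = b * ∑ k ∈ s (n + 1), F (n + 1) k - c * ∑ k ∈ s n, F n k := by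
  have h₁ : ∑ k ∈ s (n + 1), F (n + 1) k = ∑ k ∈ s (n + 2), w (n + 1) k * F (n + 2) k :=
    sum_eq_sum_mul_of_subset (hs _) (hF _) (hw _)
  have h₀ : ∑ k ∈ s n, F n k = ∑ k ∈ s (n + 2), (w n k * w (n + 1) k) * F (n + 2) k :=
    sum_eq_sum_mul_of_subset ((hs n).trans (hs _))
      (fun k hk => by rw [hF n k hk, hF (n + 1) k (hs n hk), mul_assoc])
      fun k hk => by rw [hw n k hk, zero_mul]
  rw [h₁, h₀, ← sub_eq_zero, ← hcert, mul_sum, mul_sum, mul_sum, ← sum_sub_distrib,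
    ← sum_sub_distrib]
  exact sum_congr rfl fun k _ => by ring

theorem eq_of_second_order_recurrence {K : Type*} [Field K] {X Y : ℕ → K} (a b c : ℕ → K)
    (ha : ∀ n, a n ≠ 0) (hX : ∀ n, a n * X (n + 2) = b n * X (n + 1) - c n * X n)
    (hY : ∀ n, a n * Y (n + 2) = b n * Y (n + 1) - c n * Y n)
    (h₀ : X 0 = Y 0) (h₁ : X 1 = Y 1) (n : ℕ) : X n = Y n := by
  induction n using Nat.twoStepInduction with
  | zero => exact h₀
  | one => exact h₁
  | more n ih₀ ih₁ => exact mul_left_cancel₀ (ha n) (by rw [hX, hY, ih₀, ih₁])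

end Recurrence

section QSeries

variable {q : ℂ}

theorem qp_succ (x q : ℂ) (n : ℕ) : qp x q (n + 1) = qp x q n * (1 - x * q ^ n) :=
  prod_range_succ _ _

theorem qp_self_succ (q : ℂ) (n : ℕ) : qp q q (n + 1) = qp q q n * (1 - q ^ (n + 1)) := by
  rw [qp_succ, ← pow_succ']

theorem one_sub_pow_succ_ne_zero (hq : ∀ m : ℕ, q ^ (m + 1) ≠ 1) (m : ℕ) :
    1 - q ^ (m + 1) ≠ 0 :=
  sub_ne_zero.2 (hq m).symm

theorem qp_self_ne_zero (hq : ∀ m : ℕ, q ^ (m + 1) ≠ 1) (n : ℕ) : qp q q n ≠ 0 :=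
  prod_ne_zero_iff.2 fun j _ => by rw [← pow_succ']; exact one_sub_pow_succ_ne_zero hq j

theorem sq_pow_succ_ne_one (hq : ∀ m : ℕ, q ^ (m + 1) ≠ 1) (m : ℕ) : (q ^ 2) ^ (m + 1) ≠ 1 := by
  rw [← pow_mul, show 2 * (m + 1) = 2 * m + 1 + 1 by ring]
  exact hq _

theorem pow_succ_ne_one_of_norm_lt_one (hq : ‖q‖ < 1) (m : ℕ) : q ^ (m + 1) ≠ 1 := fun h => by
  have := congrArg norm h
  rw [norm_pow, norm_one] at this
  exact (pow_lt_one₀ (norm_nonneg q) hq (Nat.succ_ne_zero m)).ne this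

noncomputable def lhsTerm (q : ℂ) (n k : ℕ) : ℂ :=
  q ^ (k ^ 2) / (qp (q ^ 2) (q ^ 2) k * qp q q (n - k))

theorem lhsTerm_eq_mul_succ (hq : ∀ m : ℕ, q ^ (m + 1) ≠ 1) {n k : ℕ} (hk : k ≤ n) :
    lhsTerm q n k = (1 - q ^ (n + 1 - k)) * lhsTerm q (n + 1) k := by
  have := qp_self_ne_zero (sq_pow_succ_ne_one hq) k
  have := qp_self_ne_zero hq (n - k)
  have := one_sub_pow_succ_ne_zero hq (n - k)
  rw [lhsTerm, lhsTerm, Nat.sub_add_comm hk, qp_self_succ]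
  field_simp

theorem lhsTerm_ratio (hq : ∀ m : ℕ, q ^ (m + 1) ≠ 1) (k j : ℕ) :
    (1 - q ^ (2 * k + 2)) * lhsTerm q (k + j + 1) (k + 1)
      = q ^ (2 * k + 1) * (1 - q ^ (j + 1)) * lhsTerm q (k + j + 1) k := by
  have := qp_self_ne_zero (sq_pow_succ_ne_one hq) k
  have := one_sub_pow_succ_ne_zero (sq_pow_succ_ne_one hq) k
  have := qp_self_ne_zero hq j
  have := one_sub_pow_succ_ne_zero hq j
  rw [lhsTerm, lhsTerm, show k + j + 1 - (k + 1) = j by omega, show k + j + 1 - k = j + 1 by omega,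
    qp_self_succ, qp_self_succ]
  field_simp
  ring

theorem lhsTerm_telescoping (hq : ∀ m : ℕ, q ^ (m + 1) ≠ 1) {n k j : ℕ} (h : k + j = n + 1) :
    (1 - q ^ (2 * n + 4) - (1 + q + q ^ (2 * n + 3)) * (1 - q ^ (j + 1))
        + q * ((1 - q ^ j) * (1 - q ^ (j + 1)))) * lhsTerm q (n + 2) k
      = (q ^ (2 * n + 4) - q ^ (2 * j)) * lhsTerm q (n + 2) (k + 1)
        - (q ^ (2 * n + 4) - q ^ (2 * (j + 1))) * lhsTerm q (n + 2) k := by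
  rw [show 2 * n + 4 = 2 * k + 2 * j + 2 by omega, show 2 * n + 3 = 2 * k + 2 * j + 1 by omega,
    show n + 2 = k + j + 1 by omega]
  linear_combination q ^ (2 * j) * lhsTerm_ratio hq k j

theorem sum_lhsTerm_certificate_eq_zero (hq : ∀ m : ℕ, q ^ (m + 1) ≠ 1) (n : ℕ) :
    ∑ k ∈ range (n + 3), (1 - q ^ (2 * n + 4) - (1 + q + q ^ (2 * n + 3)) * (1 - q ^ (n + 2 - k))
        + q * ((1 - q ^ (n + 1 - k)) * (1 - q ^ (n + 2 - k)))) * lhsTerm q (n + 2) k = 0 := by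
  set G : ℕ → ℂ := fun i => (q ^ (2 * n + 4) - q ^ (2 * (n + 2 - i))) * lhsTerm q (n + 2) i
  have htel : ∑ k ∈ range (n + 2), (1 - q ^ (2 * n + 4)
        - (1 + q + q ^ (2 * n + 3)) * (1 - q ^ (n + 2 - k))
        + q * ((1 - q ^ (n + 1 - k)) * (1 - q ^ (n + 2 - k)))) * lhsTerm q (n + 2) k
      = G (n + 2) - G 0 := by
    rw [← sum_range_sub]
    refine sum_congr rfl fun k hk => ?_
    have hk : k < n + 2 := mem_range.1 hk
    simp only [G]
    rw [show n + 2 - k = n + 1 - k + 1 by omega, show n + 2 - (k + 1) = n + 1 - k by omega]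
    exact lhsTerm_telescoping hq (by omega)
  rw [sum_range_succ, htel]
  simp only [G, Nat.sub_self, Nat.sub_zero, show n + 1 - (n + 2) = 0 by omega]
  ring

theorem lhs_recurrence (hq : ∀ m : ℕ, q ^ (m + 1) ≠ 1) (n : ℕ) :
    (1 - q ^ (2 * n + 4)) * ∑ k ∈ range (n + 2 + 1), lhsTerm q (n + 2) k
      = (1 + q + q ^ (2 * n + 3)) * ∑ k ∈ range (n + 1 + 1), lhsTerm q (n + 1) k
        - q * ∑ k ∈ range (n + 1), lhsTerm q n k :=
  recurrence_of_sum_telescoping (fun n => range (n + 1)) (lhsTerm q)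
    (fun n k => 1 - q ^ (n + 1 - k)) (fun n => range_subset_range.2 (by omega))
    (fun _ _ hk => lhsTerm_eq_mul_succ hq (mem_range_succ_iff.1 hk))
    (fun n k hk => by
      rw [Nat.sub_eq_zero_of_le (not_lt.1 (mt mem_range.2 hk)), pow_zero, sub_self])
    n _ _ _ (sum_lhsTerm_certificate_eq_zero hq n)

noncomputable def rhsTerm (q : ℂ) (n : ℕ) (k : ℤ) : ℂ :=
  (-1 : ℂ) ^ k * q ^ (2 * k ^ 2) / (qp q q ((n : ℤ) - k).toNat * qp q q ((n : ℤ) + k).toNat)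

theorem zpow_two_mul_sq (q : ℂ) (k : ℤ) : q ^ (2 * k ^ 2) = q ^ (2 * k.natAbs ^ 2) := by
  rw [← Int.natAbs_sq, ← zpow_natCast]
  push_cast
  rfl

theorem rhsTerm_of_eq {n : ℕ} {k : ℤ} {a b : ℕ} (ha : (n : ℤ) - k = a) (hb : (n : ℤ) + k = b) :
    rhsTerm q n k = (-1 : ℂ) ^ k * q ^ (2 * k.natAbs ^ 2) / (qp q q a * qp q q b) := by
  rw [rhsTerm, ha, hb, Int.toNat_natCast, Int.toNat_natCast, zpow_two_mul_sq]

theorem rhsTerm_eq_mul_succ (hq : ∀ m : ℕ, q ^ (m + 1) ≠ 1) {n : ℕ} {k : ℤ}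
    (hk : k ∈ Icc (-(n : ℤ)) n) :
    rhsTerm q n k = (1 - q ^ ((n : ℤ) + 1 - k).toNat) * (1 - q ^ ((n : ℤ) + 1 + k).toNat)
      * rhsTerm q (n + 1) k := by
  obtain ⟨hk₁, hk₂⟩ := mem_Icc.1 hk
  obtain ⟨a, ha⟩ : ∃ a : ℕ, (n : ℤ) - k = a := ⟨((n : ℤ) - k).toNat, by omega⟩
  obtain ⟨b, hb⟩ : ∃ b : ℕ, (n : ℤ) + k = b := ⟨((n : ℤ) + k).toNat, by omega⟩
  have := qp_self_ne_zero hq a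
  have := qp_self_ne_zero hq b
  have := one_sub_pow_succ_ne_zero hq a
  have := one_sub_pow_succ_ne_zero hq b
  rw [rhsTerm_of_eq ha hb, rhsTerm_of_eq (a := a + 1) (b := b + 1) (by push_cast; omega)
    (by push_cast; omega), show ((n : ℤ) + 1 - k).toNat = a + 1 by omega,
    show ((n : ℤ) + 1 + k).toNat = b + 1 by omega, qp_self_succ, qp_self_succ]
  field_simp

theorem rhsTerm_ratio (hq : ∀ m : ℕ, q ^ (m + 1) ≠ 1) {N : ℕ} {k : ℤ} {j b : ℕ}
    (hj : (N : ℤ) - k = j + 1) (hb : (N : ℤ) + k = b) :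
    q ^ (2 * j) * (1 - q ^ (b + 1)) * rhsTerm q N (k + 1)
      = -(q ^ (2 * b) * (1 - q ^ (j + 1)) * rhsTerm q N k) := by
  have := qp_self_ne_zero hq j
  have := qp_self_ne_zero hq b
  have := one_sub_pow_succ_ne_zero hq j
  have := one_sub_pow_succ_ne_zero hq b
  have hpow :
      q ^ (2 * j) * q ^ (2 * (k + 1).natAbs ^ 2) = q ^ (2 * b) * q ^ (2 * k.natAbs ^ 2) := by
    rw [← pow_add, ← pow_add]
    congr 1
    zify
    simp only [sq_abs]
    linear_combination 2 * hb - 2 * hj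
  rw [rhsTerm_of_eq (a := j) (b := b + 1) (by omega) (by omega),
    rhsTerm_of_eq (a := j + 1) (b := b) (by omega) hb, qp_self_succ, qp_self_succ,
    zpow_add_one₀ (neg_ne_zero.2 one_ne_zero)]
  field_simp
  rw [hpow]

theorem rhsTerm_telescoping (hq : ∀ m : ℕ, q ^ (m + 1) ≠ 1) {n : ℕ} {k : ℤ} {j b : ℕ}
    (hj : (n : ℤ) + 2 - k = j + 1) (hb : (n : ℤ) + 2 + k = b) :
    (1 - q ^ (2 * n + 4) - (1 + q + q ^ (2 * n + 3)) * ((1 - q ^ (j + 1)) * (1 - q ^ b))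
        + q * ((1 - q ^ j) * (1 - q ^ ((n : ℤ) + 1 + k).toNat) * ((1 - q ^ (j + 1)) * (1 - q ^ b))))
        * rhsTerm q (n + 2) k
      = -(q ^ (2 * j) * (1 - q ^ (b + 1)) * rhsTerm q (n + 2) (k + 1))
        + q ^ (2 * (j + 1)) * (1 - q ^ b) * rhsTerm q (n + 2) k := by
  have hr := rhsTerm_ratio hq (N := n + 2) (by push_cast; omega) (by push_cast; omega)
  rcases b with _ | c
  · -- `k = -(n + 2)`: every term carrying `1 - q ^ b` vanishes
    rw [show ((n : ℤ) + 1 + k).toNat = 0 by omega, show 2 * n + 4 = j + 1 by omega]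
    linear_combination hr
  · rw [show ((n : ℤ) + 1 + k).toNat = c by omega, show 2 * n + 4 = j + c + 2 by omega,
      show 2 * n + 3 = j + c + 1 by omega]
    linear_combination hr

theorem sum_rhsTerm_certificate_eq_zero (hq : ∀ m : ℕ, q ^ (m + 1) ≠ 1) (n : ℕ) :
    ∑ k ∈ Icc (-((n : ℤ) + 2)) ((n : ℤ) + 2), (1 - q ^ (2 * n + 4)
        - (1 + q + q ^ (2 * n + 3))
          * ((1 - q ^ ((n : ℤ) + 2 - k).toNat) * (1 - q ^ ((n : ℤ) + 2 + k).toNat))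
        + q * ((1 - q ^ ((n : ℤ) + 1 - k).toNat) * (1 - q ^ ((n : ℤ) + 1 + k).toNat)
          * ((1 - q ^ ((n : ℤ) + 2 - k).toNat) * (1 - q ^ ((n : ℤ) + 2 + k).toNat))))
        * rhsTerm q (n + 2) k = 0 := by
  set H : ℤ → ℂ := fun i =>
    -(q ^ (2 * ((n : ℤ) + 2 - i).toNat) * (1 - q ^ ((n : ℤ) + 2 + i).toNat) * rhsTerm q (n + 2) i)
  have htel : ∑ k ∈ Ico (-((n : ℤ) + 2)) ((n : ℤ) + 2), (1 - q ^ (2 * n + 4)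
        - (1 + q + q ^ (2 * n + 3))
          * ((1 - q ^ ((n : ℤ) + 2 - k).toNat) * (1 - q ^ ((n : ℤ) + 2 + k).toNat))
        + q * ((1 - q ^ ((n : ℤ) + 1 - k).toNat) * (1 - q ^ ((n : ℤ) + 1 + k).toNat)
          * ((1 - q ^ ((n : ℤ) + 2 - k).toNat) * (1 - q ^ ((n : ℤ) + 2 + k).toNat))))
        * rhsTerm q (n + 2) k = H ((n : ℤ) + 2) - H (-((n : ℤ) + 2)) := by
    rw [← Int.sum_Ico_sub H (by omega)]
    refine sum_congr rfl fun k hk => ?_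
    obtain ⟨hk₁, hk₂⟩ := mem_Ico.1 hk
    obtain ⟨j, hj⟩ : ∃ j : ℕ, (n : ℤ) + 2 - k = j + 1 := ⟨((n : ℤ) + 1 - k).toNat, by omega⟩
    obtain ⟨b, hb⟩ : ∃ b : ℕ, (n : ℤ) + 2 + k = b := ⟨((n : ℤ) + 2 + k).toNat, by omega⟩
    simp only [H]
    rw [show ((n : ℤ) + 2 - k).toNat = j + 1 by omega, show ((n : ℤ) + 1 - k).toNat = j by omega,
      show ((n : ℤ) + 2 + k).toNat = b by omega, show ((n : ℤ) + 2 - (k + 1)).toNat = j by omega,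
      show ((n : ℤ) + 2 + (k + 1)).toNat = b + 1 by omega]
    linear_combination rhsTerm_telescoping hq hj hb
  rw [← Ico_insert_right (by omega), sum_insert right_notMem_Ico, htel]
  simp only [H, sub_self, add_neg_cancel, Int.toNat_zero, pow_zero, mul_zero, zero_mul, neg_zero]
  rw [show ((n : ℤ) + 2 + ((n : ℤ) + 2)).toNat = 2 * n + 4 by omega]
  ring

theorem rhs_recurrence (hq : ∀ m : ℕ, q ^ (m + 1) ≠ 1) (n : ℕ) :
    (1 - q ^ (2 * n + 4)) * ∑ k ∈ Icc (-((n + 2 : ℕ) : ℤ)) (n + 2 : ℕ), rhsTerm q (n + 2) k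
      = (1 + q + q ^ (2 * n + 3))
          * ∑ k ∈ Icc (-((n + 1 : ℕ) : ℤ)) (n + 1 : ℕ), rhsTerm q (n + 1) k
        - q * ∑ k ∈ Icc (-(n : ℤ)) n, rhsTerm q n k :=
  -- the truncation of `Int.toNat` makes the weight vanish for `|k| > n`
  recurrence_of_sum_telescoping (fun n => Icc (-(n : ℤ)) n) (rhsTerm q)
    (fun n k => (1 - q ^ ((n : ℤ) + 1 - k).toNat) * (1 - q ^ ((n : ℤ) + 1 + k).toNat))
    (fun n => Icc_subset_Icc (by omega) (by omega))
    (fun _ _ hk => rhsTerm_eq_mul_succ hq hk)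
    (fun n k hk => by
      have : ((n : ℤ) + 1 - k).toNat = 0 ∨ ((n : ℤ) + 1 + k).toNat = 0 := by
        rw [mem_Icc] at hk
        omega
      rcases this with h | h <;> simp [h])
    n _ _ _ (sum_rhsTerm_certificate_eq_zero hq n)

theorem lhs_one_eq_rhs_one (hq : ∀ m : ℕ, q ^ (m + 1) ≠ 1) :
    ∑ k ∈ range (1 + 1), lhsTerm q 1 k = ∑ k ∈ Icc (-((1 : ℕ) : ℤ)) (1 : ℕ), rhsTerm q 1 k := by
  have h₁ : 1 - q ≠ 0 := by simpa using one_sub_pow_succ_ne_zero hq 0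
  have h₂ : 1 - q ^ 2 ≠ 0 := one_sub_pow_succ_ne_zero hq 1
  rw [show Icc (-((1 : ℕ) : ℤ)) (1 : ℕ) = {-1, 0, 1} by rfl, sum_insert (by decide),
    sum_insert (by decide), sum_singleton, sum_range_succ, sum_range_one]
  norm_num [lhsTerm, rhsTerm, qp, prod_range_succ, show Int.toNat 2 = 2 from rfl]
  field_simp
  ring

end QSeries

theorem stmt14_general (q : ℂ) (hq : ‖q‖ < 1) (n : ℕ) :
    ∑ k ∈ Finset.range (n + 1), q ^ (k ^ 2) / (qp (q ^ 2) (q ^ 2) k * qp q q (n - k))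
      = ∑ k ∈ Finset.Icc (-(n : ℤ)) (n : ℤ),
          (-1 : ℂ) ^ k * q ^ (2 * k ^ 2)
            / (qp q q ((n : ℤ) - k).toNat * qp q q ((n : ℤ) + k).toNat) := by
  have hq' := pow_succ_ne_one_of_norm_lt_one hq
  exact eq_of_second_order_recurrence (X := fun n => ∑ k ∈ range (n + 1), lhsTerm q n k)
    (Y := fun n => ∑ k ∈ Icc (-(n : ℤ)) n, rhsTerm q n k)
    (fun n => 1 - q ^ (2 * n + 4)) (fun n => 1 + q + q ^ (2 * n + 3)) (fun _ => q)
    (fun n => one_sub_pow_succ_ne_zero hq' (2 * n + 3)) (lhs_recurrence hq') (rhs_recurrence hq')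
    (by simp [lhsTerm, rhsTerm, qp]) (lhs_one_eq_rhs_one hq') n

theorem stmt14 (q : ℂ) (hq0 : q ≠ 0) (hq : ‖q‖ < 1) (n : ℕ) :
    ∑ k ∈ Finset.range (n + 1), q ^ (k ^ 2) / (qp (q ^ 2) (q ^ 2) k * qp q q (n - k))
      = ∑ k ∈ Finset.Icc (-(n : ℤ)) (n : ℤ),
          (-1 : ℂ) ^ k * q ^ (2 * k ^ 2)
            / (qp q q ((n : ℤ) - k).toNat * qp q q ((n : ℤ) + k).toNat) :=
  stmt14_general q hq n
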